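/- (Symmetries of Newton's equations, d = 0: invariance of the solution set) Let a ≠ 0, b ≠ 0, c ≠ 0 and suppose the twice-differentiable curve (q1, q2) : ℝ → ℝ² satisfies Newton's equations q̈1 − (a/(2b²))e^{−a q1} q̇2² + (2c/b)e^{−a q1} q̇2 = 0 and q̈2 − a q̇1 q̇2 + 2bc q̇1 = 0. Then for every s, τ, γ ∈ ℝ, the transformed curve q̃1(t) = q1(e^{−as}(t−τ)) + 2s, q̃2(t) = e^{as} q2(e^{−as}(t−τ)) + γ also satisfies Newton's equations. (This is the one-parameter group generated by the symmetry vector fields v = (αat+β)∂/∂t + 2α ∂/∂q1 + (αa q2 + γ)∂/∂q2.) -/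

import Mathlib

/-- The curve `(q₁,q₂)` is a (twice-differentiable) solution of Newton's equations
`q̈₁ − (a/(2b²))e^{−aq₁}q̇₂² + (2c/b)e^{−aq₁}q̇₂ = 0`, `q̈₂ − aq̇₁q̇₂ + 2bcq̇₁ = 0`. -/
def IsNewtonSolutionD0 (a b c : ℝ) (q₁ q₂ : ℝ → ℝ) : Prop :=
  ∃ q₁' q₂' q₁'' q₂'' : ℝ → ℝ,
    (∀ t, HasDerivAt q₁ (q₁' t) t) ∧ (∀ t, HasDerivAt q₂ (q₂' t) t) ∧
    (∀ t, HasDerivAt q₁' (q₁'' t) t) ∧ (∀ t, HasDerivAt q₂' (q₂'' t) t) ∧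
    (∀ t, q₁'' t - a / (2 * b ^ 2) * Real.exp (-a * q₁ t) * (q₂' t) ^ 2
            + 2 * c / b * Real.exp (-a * q₁ t) * q₂' t = 0) ∧
    (∀ t, q₂'' t - a * q₁' t * q₂' t + 2 * b * c * q₁' t = 0)

/-!
The transformation is the composite of three symmetries: the time translation `t ↦ t - τ`
and the shift `q₂ ↦ q₂ + γ` (the equations are autonomous and involve `q₂` only through
`q̇₂`), and the scaling `q₁ ↦ q₁ + 2s`, `q₂ ↦ e^{as} q₂`, `t ↦ e^{as} t`. Under the scaling
each term of the first equation picks up the factor `e^{-2as}` and each term of the second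
the factor `e^{-as}`, so both equations are preserved.
-/

theorem HasDerivAt.comp_const_mul {𝕜 : Type*} [NontriviallyNormedField 𝕜] {f : 𝕜 → 𝕜}
    {f' : 𝕜} (k x : 𝕜) (hf : HasDerivAt f f' (k * x)) :
    HasDerivAt (fun x ↦ f (k * x)) (k * f') x := by
  simpa [Function.comp_def, mul_comm] using hf.comp x ((hasDerivAt_id x).const_mul k)

namespace IsNewtonSolutionD0

variable {a b c : ℝ} {q₁ q₂ : ℝ → ℝ}

theorem comp_sub_const (h : IsNewtonSolutionD0 a b c q₁ q₂) (τ : ℝ) :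
    IsNewtonSolutionD0 a b c (fun t ↦ q₁ (t - τ)) (fun t ↦ q₂ (t - τ)) := by
  obtain ⟨q₁', q₂', q₁'', q₂'', hq₁, hq₂, hq₁', hq₂', eq₁, eq₂⟩ := h
  exact ⟨fun t ↦ q₁' (t - τ), fun t ↦ q₂' (t - τ), fun t ↦ q₁'' (t - τ), fun t ↦ q₂'' (t - τ),
    fun t ↦ (hq₁ _).comp_sub_const t τ, fun t ↦ (hq₂ _).comp_sub_const t τ,
    fun t ↦ (hq₁' _).comp_sub_const t τ, fun t ↦ (hq₂' _).comp_sub_const t τ,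
    fun t ↦ eq₁ (t - τ), fun t ↦ eq₂ (t - τ)⟩

theorem add_const_snd (h : IsNewtonSolutionD0 a b c q₁ q₂) (γ : ℝ) :
    IsNewtonSolutionD0 a b c q₁ (fun t ↦ q₂ t + γ) := by
  obtain ⟨q₁', q₂', q₁'', q₂'', hq₁, hq₂, hq₁', hq₂', eq₁, eq₂⟩ := h
  exact ⟨q₁', q₂', q₁'', q₂'', hq₁, fun t ↦ (hq₂ t).add_const γ, hq₁', hq₂', eq₁, eq₂⟩

theorem rescale (h : IsNewtonSolutionD0 a b c q₁ q₂) (s : ℝ) :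
    IsNewtonSolutionD0 a b c (fun t ↦ q₁ (Real.exp (-(a * s)) * t) + 2 * s)
      (fun t ↦ Real.exp (a * s) * q₂ (Real.exp (-(a * s)) * t)) := by
  obtain ⟨q₁', q₂', q₁'', q₂'', hq₁, hq₂, hq₁', hq₂', eq₁, eq₂⟩ := h
  set e := Real.exp (-(a * s))
  have he : Real.exp (a * s) * e = 1 := by rw [← Real.exp_add, add_neg_cancel, Real.exp_zero]
  have hexp : ∀ x, Real.exp (-a * (x + 2 * s)) = e * e * Real.exp (-a * x) := fun x ↦ by
    rw [← Real.exp_add, ← Real.exp_add]; ring_nf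
  refine ⟨fun t ↦ e * q₁' (e * t), fun t ↦ q₂' (e * t), fun t ↦ e * (e * q₁'' (e * t)),
    fun t ↦ e * q₂'' (e * t), fun t ↦ ((hq₁ _).comp_const_mul e t).add_const _, fun t ↦ ?_,
    fun t ↦ ((hq₁' _).comp_const_mul e t).const_mul e, fun t ↦ (hq₂' _).comp_const_mul e t,
    fun t ↦ ?_, fun t ↦ ?_⟩
  · simpa [← mul_assoc, he] using ((hq₂ _).comp_const_mul e t).const_mul (Real.exp (a * s))
  · rw [hexp]
    linear_combination e * e * eq₁ (e * t)
  · linear_combination e * eq₂ (e * t)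

end IsNewtonSolutionD0

theorem newton_symmetry_d0 (a b c : ℝ)
    (q₁ q₂ : ℝ → ℝ) (h : IsNewtonSolutionD0 a b c q₁ q₂) :
    ∀ s τ γ : ℝ, IsNewtonSolutionD0 a b c
      (fun t => q₁ (Real.exp (-(a * s)) * (t - τ)) + 2 * s)
      (fun t => Real.exp (a * s) * q₂ (Real.exp (-(a * s)) * (t - τ)) + γ) :=
  fun s τ γ ↦ ((h.rescale s).comp_sub_const τ).add_const_snd γ
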